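/- arXiv:math/0610248 — 3 statements merged into one kernel-verified Lean document; each statement's English description precedes it below -/
import Mathlib

section
/- The function θ₀(r) = (1 - 4r²·ln r - r⁴)/(2·r^{1/2}·(1+r²)) satisfies 𝓛θ₀ = 0 for all r > 0, where 𝓛 = -d²/dr² + 3/(4r²) - 8/(1+r²)². -/
/-!
Direct computation. Writing `r = s²` with `s > 0` turns `√r` into `s`, so after clearing
denominators every identity (the two derivatives and the equation `θ₀'' = (3/(4r²) - 8/(1+r²)²) θ₀`)
becomes a polynomial identity in `s` and `log (s²)`.
-/

open Real

noncomputable def theta0 (x : ℝ) : ℝ :=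
  (1 - 4 * x ^ 2 * log x - x ^ 4) / (2 * √x * (1 + x ^ 2))

noncomputable def theta0' (x : ℝ) : ℝ :=
  (4 * x ^ 4 * log x - 12 * x ^ 2 * log x - 3 * x ^ 6 - 15 * x ^ 4 - 13 * x ^ 2 - 1) /
    (4 * √x * x * (1 + x ^ 2) ^ 2)

noncomputable def theta0'' (x : ℝ) : ℝ :=
  (-24 * x ^ 6 * log x + 208 * x ^ 4 * log x - 24 * x ^ 2 * log x
      - 6 * x ^ 8 + 52 * x ^ 6 - 52 * x ^ 2 + 6) /
    (16 * √x * x ^ 2 * (1 + x ^ 2) ^ 3)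

theorem hasDerivAt_theta0 {x : ℝ} (hx : 0 < x) : HasDerivAt theta0 (theta0' x) x := by
  obtain ⟨s, hs, rfl⟩ : ∃ s, 0 < s ∧ s ^ 2 = x := ⟨√x, sqrt_pos.2 hx, sq_sqrt hx.le⟩
  have hsqrt : √(s ^ 2) = s := sqrt_sq hs.le
  have hnum := ((hasDerivAt_const (s ^ 2) (1 : ℝ)).sub
    (((hasDerivAt_pow 2 _).const_mul 4).mul (hasDerivAt_log hx.ne'))).sub (hasDerivAt_pow 4 _)
  have hden := ((hasDerivAt_sqrt hx.ne').const_mul 2).mul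
    ((hasDerivAt_const (s ^ 2) (1 : ℝ)).add (hasDerivAt_pow 2 _))
  have hden_ne : 2 * √(s ^ 2) * (1 + (s ^ 2) ^ 2) ≠ 0 := by rw [hsqrt]; positivity
  refine (hnum.div hden hden_ne).congr_deriv ?_
  simp only [theta0', Pi.add_apply, Pi.sub_apply, Pi.mul_apply, hsqrt]
  field_simp
  ring

theorem hasDerivAt_theta0' {x : ℝ} (hx : 0 < x) : HasDerivAt theta0' (theta0'' x) x := by
  obtain ⟨s, hs, rfl⟩ : ∃ s, 0 < s ∧ s ^ 2 = x := ⟨√x, sqrt_pos.2 hx, sq_sqrt hx.le⟩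
  have hsqrt : √(s ^ 2) = s := sqrt_sq hs.le
  have hlog := hasDerivAt_log hx.ne'
  have hnum := (((((((hasDerivAt_pow 4 _).const_mul 4).mul hlog).sub
    (((hasDerivAt_pow 2 _).const_mul 12).mul hlog)).sub
    ((hasDerivAt_pow 6 _).const_mul 3)).sub ((hasDerivAt_pow 4 _).const_mul 15)).sub
    ((hasDerivAt_pow 2 _).const_mul 13)).sub (hasDerivAt_const (s ^ 2) (1 : ℝ))
  have hden := ((((hasDerivAt_sqrt hx.ne').const_mul 4).mul (hasDerivAt_id' (s ^ 2))).mul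
    (((hasDerivAt_const (s ^ 2) (1 : ℝ)).add (hasDerivAt_pow 2 _)).pow 2))
  have hden_ne : 4 * √(s ^ 2) * s ^ 2 * (1 + (s ^ 2) ^ 2) ^ 2 ≠ 0 := by rw [hsqrt]; positivity
  refine (hnum.div hden hden_ne).congr_deriv ?_
  simp only [theta0'', Pi.add_apply, Pi.sub_apply, Pi.mul_apply, Pi.pow_apply, hsqrt]
  field_simp
  ring

theorem deriv_deriv_theta0 {x : ℝ} (hx : 0 < x) : deriv (deriv theta0) x = theta0'' x := by
  have hderiv : deriv theta0 =ᶠ[nhds x] theta0' :=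
    Filter.eventually_of_mem (Ioi_mem_nhds hx) fun y hy => (hasDerivAt_theta0 hy).deriv
  rw [hderiv.deriv_eq, (hasDerivAt_theta0' hx).deriv]

theorem theta0''_eq_mul_theta0 {x : ℝ} (hx : 0 < x) :
    theta0'' x = (3 / (4 * x ^ 2) - 8 / (1 + x ^ 2) ^ 2) * theta0 x := by
  obtain ⟨s, hs, rfl⟩ : ∃ s, 0 < s ∧ s ^ 2 = x := ⟨√x, sqrt_pos.2 hx, sq_sqrt hx.le⟩
  simp only [theta0'', theta0, sqrt_sq hs.le]
  field_simp
  ring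

/-- `θ₀(r) = (1 - 4r² ln r - r⁴)/(2 r^{1/2} (1+r²))` satisfies `𝓛θ₀ = 0` on `(0,∞)`
where `𝓛 = -d²/dr² + 3/(4r²) - 8/(1+r²)²`. -/
theorem stmt_3 (θ₀ : ℝ → ℝ)
    (hθ : ∀ r : ℝ, θ₀ r = (1 - 4 * r ^ 2 * Real.log r - r ^ 4) / (2 * r ^ (1/2 : ℝ) * (1 + r ^ 2))) :
    ∀ r : ℝ, 0 < r →
      -(deriv (deriv θ₀) r) + (3 / (4 * r ^ 2)) * θ₀ r - (8 / (1 + r ^ 2) ^ 2) * θ₀ r = 0 := by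
  intro r hr
  have hθ₀ : θ₀ = theta0 := funext fun x => by rw [hθ, theta0, sqrt_eq_rpow]
  rw [hθ₀, deriv_deriv_theta0 hr, theta0''_eq_mul_theta0 hr]
  ring
end

section
/- The functions φ(R) = R^{3/2}/(1+R²) and θ(R) = (-1 + 4R²·ln R + R⁴)/(R^{1/2}·(1+R²)) both satisfy L̃y = 0 on (0,∞), where L̃ = ∂²_R - 3/(4R²) + 8/(1+R²)², and their Wronskian φ·θ' - φ'·θ equals 2 identically. -/
/-!
The exponents `3/2` and `-1/2` are the two indicial roots `a(a-1) = 3/4` of `L̃` at `R = 0`,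
so on `y = R^a g` the singular term cancels:
`L̃(R^a g) = R^a (g'' + 2a g'/R + 8 g/(1+R²)²)`.
Writing `φ = R^{3/2} g` and `θ = R^{-1/2} h` with `g = 1/(1+R²)` and
`h = (-1 + 4R² ln R + R⁴)/(1+R²)`, both equations become identities between rational functions
of `R` and `ln R`; likewise `φθ' - φ'θ = R(gh' - g'h) - 2gh`, which is `2`.
-/

open Real Filter Topology

/-- The operator `L̃`. -/
noncomputable def radialOp (f : ℝ → ℝ) (R : ℝ) : ℝ :=
  deriv (deriv f) R - 3 / (4 * R ^ 2) * f R + 8 / (1 + R ^ 2) ^ 2 * f R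

theorem deriv_deriv_eq_of_eventually_hasDerivAt {f f' : ℝ → ℝ} {f'' x : ℝ}
    (hf : ∀ᶠ y in 𝓝 x, HasDerivAt f (f' y) y) (hf' : HasDerivAt f' f'' x) :
    deriv (deriv f) x = f'' := by
  have h : deriv f =ᶠ[𝓝 x] f' := hf.mono fun y hy => hy.deriv
  rw [h.deriv_eq, hf'.deriv]

theorem radialOp_congr {f₁ f₂ : ℝ → ℝ} {x : ℝ} (h : f₁ =ᶠ[𝓝 x] f₂) :
    radialOp f₁ x = radialOp f₂ x := by
  simp only [radialOp, h.deriv.deriv_eq, h.eq_of_nhds]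

section RpowMul

variable {a x : ℝ} {g g' : ℝ → ℝ}

theorem hasDerivAt_rpow_mul {d : ℝ} (hx : 0 < x) (hg : HasDerivAt g d x) :
    HasDerivAt (fun y => y ^ a * g y) (x ^ a * (d + a * g x / x)) x :=
  ((hasDerivAt_rpow_const (Or.inl hx.ne')).mul hg).congr_deriv <| by
    rw [rpow_sub_one hx.ne']; ring

theorem deriv_deriv_rpow_mul {d₂ : ℝ} (hx : 0 < x) (hg : ∀ᶠ y in 𝓝 x, HasDerivAt g (g' y) y)
    (hg' : HasDerivAt g' d₂ x) :
    deriv (deriv fun y => y ^ a * g y) x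
      = x ^ a * (d₂ + 2 * a * g' x / x + a * (a - 1) * g x / x ^ 2) := by
  have h₁ : ∀ᶠ y in 𝓝 x, HasDerivAt (fun y => y ^ a * g y) (y ^ a * (g' y + a * g y / y)) y :=
    (hg.and (eventually_gt_nhds hx)).mono fun y ⟨h, hy⟩ => hasDerivAt_rpow_mul hy h
  have h₂ := hasDerivAt_rpow_mul (a := a) hx
    (hg'.fun_add ((hg.self_of_nhds.const_mul a).fun_div (hasDerivAt_id' x) hx.ne'))
  rw [deriv_deriv_eq_of_eventually_hasDerivAt h₁ h₂]
  field_simp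
  ring

theorem radialOp_rpow_mul {d₂ : ℝ} (ha : a * (a - 1) = 3 / 4) (hx : 0 < x)
    (hg : ∀ᶠ y in 𝓝 x, HasDerivAt g (g' y) y) (hg' : HasDerivAt g' d₂ x) :
    radialOp (fun y => y ^ a * g y) x
      = x ^ a * (d₂ + 2 * a * g' x / x + 8 / (1 + x ^ 2) ^ 2 * g x) := by
  rw [radialOp, deriv_deriv_rpow_mul hx hg hg', ha]
  field_simp
  ring

end RpowMul

noncomputable def phiFactor (y : ℝ) : ℝ := (1 + y ^ 2)⁻¹

noncomputable def thetaFactor (y : ℝ) : ℝ := (-1 + 4 * y ^ 2 * log y + y ^ 4) / (1 + y ^ 2)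

theorem hasDerivAt_phiFactor (x : ℝ) : HasDerivAt phiFactor (-2 * x / (1 + x ^ 2) ^ 2) x :=
  (((hasDerivAt_pow 2 x).const_add 1).fun_inv (by positivity)).congr_deriv (by norm_num)

theorem hasDerivAt_phiFactor_deriv (x : ℝ) :
    HasDerivAt (fun y => -2 * y / (1 + y ^ 2) ^ 2) ((6 * x ^ 2 - 2) / (1 + x ^ 2) ^ 3) x := by
  refine (((hasDerivAt_id' x).const_mul (-2)).fun_div
    (((hasDerivAt_pow 2 x).const_add 1).fun_pow 2) (by positivity)).congr_deriv ?_
  norm_num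
  field_simp
  ring

theorem hasDerivAt_thetaFactor {x : ℝ} (hx : x ≠ 0) :
    HasDerivAt thetaFactor
      (2 * x * (4 * log x + 3 + 4 * x ^ 2 + x ^ 4) / (1 + x ^ 2) ^ 2) x := by
  refine (((((hasDerivAt_pow 2 x).const_mul 4).fun_mul (hasDerivAt_log hx)).const_add (-1)
    |>.fun_add (hasDerivAt_pow 4 x)).fun_div ((hasDerivAt_pow 2 x).const_add 1)
    (by positivity)).congr_deriv ?_
  norm_num
  field_simp
  ring

theorem hasDerivAt_thetaFactor_deriv {x : ℝ} (hx : x ≠ 0) :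
    HasDerivAt (fun y => 2 * y * (4 * log y + 3 + 4 * y ^ 2 + y ^ 4) / (1 + y ^ 2) ^ 2)
      (2 * (4 * log x - 12 * x ^ 2 * log x + 7 + 7 * x ^ 2 + x ^ 4 + x ^ 6) / (1 + x ^ 2) ^ 3)
      x := by
  refine ((((hasDerivAt_id' x).const_mul 2).fun_mul
    ((((hasDerivAt_log hx).const_mul 4).add_const 3 |>.fun_add
      ((hasDerivAt_pow 2 x).const_mul 4)).fun_add (hasDerivAt_pow 4 x))).fun_div
    (((hasDerivAt_pow 2 x).const_add 1).fun_pow 2) (by positivity)).congr_deriv ?_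
  norm_num
  field_simp
  ring

theorem radialOp_phi {x : ℝ} (hx : 0 < x) :
    radialOp (fun y => y ^ (3 / 2 : ℝ) * phiFactor y) x = 0 := by
  rw [radialOp_rpow_mul (by norm_num) hx (.of_forall hasDerivAt_phiFactor)
    (hasDerivAt_phiFactor_deriv x), phiFactor]
  field_simp
  ring

theorem radialOp_theta {x : ℝ} (hx : 0 < x) :
    radialOp (fun y => y ^ (-1 / 2 : ℝ) * thetaFactor y) x = 0 := by
  rw [radialOp_rpow_mul (by norm_num) hx
    ((eventually_ne_nhds hx.ne').mono fun _ => hasDerivAt_thetaFactor)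
    (hasDerivAt_thetaFactor_deriv hx.ne'), thetaFactor]
  field_simp
  ring

theorem rpow_mul_wronskian (a b x g dg h dh : ℝ) :
    x ^ a * g * (x ^ b * (dh + b * h / x)) - x ^ a * (dg + a * g / x) * (x ^ b * h)
      = x ^ a * x ^ b * (g * dh - dg * h + (b - a) * g * h / x) := by
  ring

theorem wronskian_phi_theta {x : ℝ} (hx : 0 < x) :
    x ^ (3 / 2 : ℝ) * phiFactor x * deriv (fun y => y ^ (-1 / 2 : ℝ) * thetaFactor y) x
      - deriv (fun y => y ^ (3 / 2 : ℝ) * phiFactor y) x * (x ^ (-1 / 2 : ℝ) * thetaFactor x)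
      = 2 := by
  have hpow : x ^ (3 / 2 : ℝ) * x ^ (-1 / 2 : ℝ) = x := by
    rw [← rpow_add hx]; norm_num
  rw [(hasDerivAt_rpow_mul hx (hasDerivAt_thetaFactor hx.ne')).deriv,
    (hasDerivAt_rpow_mul hx (hasDerivAt_phiFactor x)).deriv, rpow_mul_wronskian, hpow,
    phiFactor, thetaFactor]
  field_simp
  ring

/-- `φ(R) = R^{3/2}/(1+R²)` and `θ(R) = (-1 + 4R² ln R + R⁴)/(R^{1/2}(1+R²))` both solve
`L̃ y = 0` on `(0,∞)` with `L̃ = ∂²_R - 3/(4R²) + 8/(1+R²)²`, and their Wronskian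
`φ θ' - φ' θ` is identically `2`. -/
theorem stmt_5 (φ θ : ℝ → ℝ)
    (hφ : ∀ R : ℝ, φ R = R ^ (3/2 : ℝ) / (1 + R ^ 2))
    (hθ : ∀ R : ℝ, θ R = (-1 + 4 * R ^ 2 * Real.log R + R ^ 4) / (R ^ (1/2 : ℝ) * (1 + R ^ 2))) :
    ∀ R : ℝ, 0 < R →
      (deriv (deriv φ) R - (3 / (4 * R ^ 2)) * φ R + (8 / (1 + R ^ 2) ^ 2) * φ R = 0) ∧
      (deriv (deriv θ) R - (3 / (4 * R ^ 2)) * θ R + (8 / (1 + R ^ 2) ^ 2) * θ R = 0) ∧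
      (φ R * deriv θ R - deriv φ R * θ R = 2) := by
  intro R hR
  have hφ' : φ = fun y => y ^ (3 / 2 : ℝ) * phiFactor y :=
    funext fun y => by rw [hφ, phiFactor, div_eq_mul_inv]
  have hθ' : θ =ᶠ[𝓝 R] fun y => y ^ (-1 / 2 : ℝ) * thetaFactor y :=
    (eventually_gt_nhds hR).mono fun y hy => by
      dsimp only
      rw [hθ, thetaFactor, neg_div, rpow_neg hy.le]
      field_simp
  subst hφ'
  refine ⟨radialOp_phi hR, (radialOp_congr hθ').trans (radialOp_theta hR), ?_⟩
  rw [hθ'.deriv_eq, hθ'.eq_of_nhds]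
  exact wronskian_phi_theta hR
end

section
/- Let ν > 0 and consider the ODE φ''(τ) + τ^{-2-2/ν}·φ(τ) = 0 on (0,∞). Define formal coefficients by c_{j,0} = 1 and c_{j,k}·(j - 2k/ν)·(j - 1 - 2k/ν) + c_{j,k-1} = 0 for k ≥ 1, j ∈ {0,1}. If ν is not an even integer then these recursions are solvable, the coefficients satisfy |c_{j,k}| ≤ C^k/(k!)² for some C, and φ_j(τ) = Σ_{k≥0} c_{j,k}·τ^{j-2k/ν} converges for all τ > 0 and solves the ODE. -/
/-!
Write `q = 2/ν`. For `k ≥ 1` the indicial factors `j - q k` and `j - 1 - q k` do not vanish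
(for `j = 1` this is `ν ∉ 2ℤ`) and grow linearly in `k`, which gives `|c_k| ≤ C^k/(k!)²`.
So `Σ c_k x^k` is entire, and `φ_j(τ) = τ^j Σ c_k (τ^{-q})^k` can be differentiated termwise
twice on `(0, ∞)`. In `φ_j''` the `k = 0` term vanishes because `j(j-1) = 0`, and the
recursion turns the `(k+1)`-st term into `-τ^{-2-q}` times the `k`-th term of `φ_j`.
-/

open Real Filter Topology Nat

def IsEntireCoeffs (a : ℕ → ℝ) : Prop :=
  ∀ R : ℝ, Summable fun k => a k * R ^ k

lemma rpow_le_rpow_add_rpow {a b y : ℝ} (p : ℝ) (ha : 0 < a) (hay : a ≤ y) (hyb : y ≤ b) :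
    y ^ p ≤ a ^ p + b ^ p := by
  rcases le_total 0 p with hp | hp
  · linarith [rpow_le_rpow (ha.le.trans hay) hyb hp, rpow_nonneg ha.le p]
  · linarith [rpow_le_rpow_of_nonpos ha hay hp, rpow_nonneg (ha.le.trans (hay.trans hyb)) p]

lemma rpow_sub_mul_natCast {t : ℝ} (ht : 0 < t) (β q : ℝ) (k : ℕ) :
    t ^ (β - q * k) = t ^ β * (t ^ (-q)) ^ k := by
  rw [sub_eq_add_neg, rpow_add ht, ← neg_mul, rpow_mul_natCast ht.le]

namespace IsEntireCoeffs

variable {a : ℕ → ℝ}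

lemma of_abs_le_pow_div_factorial_sq {C : ℝ} (hC : 0 ≤ C)
    (ha : ∀ k, |a k| ≤ C ^ k / (k ! : ℝ) ^ 2) : IsEntireCoeffs a := by
  intro R
  refine (summable_pow_div_factorial (C * |R|)).of_norm_bounded fun k => ?_
  have hfac : (k ! : ℝ) ≤ (k ! : ℝ) ^ 2 := by
    have : (1 : ℝ) ≤ k ! := by exact_mod_cast k.factorial_pos
    nlinarith
  calc ‖a k * R ^ k‖ = |a k| * |R| ^ k := by rw [norm_mul, norm_pow, norm_eq_abs, norm_eq_abs]
    _ ≤ C ^ k / (k ! : ℝ) ^ 2 * |R| ^ k := by gcongr; exact ha k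
    _ ≤ C ^ k / k ! * |R| ^ k := by gcongr
    _ = (C * |R|) ^ k / k ! := by rw [mul_pow]; ring

lemma mul_linear (ha : IsEntireCoeffs a) (β q : ℝ) :
    IsEntireCoeffs fun k => a k * (β - q * k) := by
  intro R
  refine (((ha (2 * |R|)).abs).mul_left (|β| + |q|)).of_norm_bounded fun k => ?_
  have hk : (k : ℝ) ≤ 2 ^ k := by exact_mod_cast k.lt_two_pow_self.le
  have hlin : |β - q * k| ≤ (|β| + |q|) * 2 ^ k := by
    calc |β - q * k| ≤ |β| + |q| * k := by
          simpa [abs_mul] using abs_sub β (q * k)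
      _ ≤ |β| * 2 ^ k + |q| * 2 ^ k := by
          gcongr
          · exact le_mul_of_one_le_right (abs_nonneg β) (one_le_pow₀ one_le_two)
      _ = (|β| + |q|) * 2 ^ k := by ring
  calc ‖a k * (β - q * k) * R ^ k‖ = |a k| * |β - q * k| * |R| ^ k := by
        rw [norm_mul, norm_mul, norm_pow, norm_eq_abs, norm_eq_abs, norm_eq_abs]
    _ ≤ |a k| * ((|β| + |q|) * 2 ^ k) * |R| ^ k := by gcongr
    _ = (|β| + |q|) * |a k * (2 * |R|) ^ k| := by
        rw [abs_mul, abs_of_nonneg (by positivity : (0 : ℝ) ≤ (2 * |R|) ^ k), mul_pow]; ring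

lemma summable_rpow (ha : IsEntireCoeffs a) (β q : ℝ) {t : ℝ} (ht : 0 < t) :
    Summable fun k => a k * t ^ (β - q * k) :=
  ((ha (t ^ (-q))).mul_left (t ^ β)).congr fun k => by rw [rpow_sub_mul_natCast ht]; ring

lemma hasDerivAt_tsum_rpow (ha : IsEntireCoeffs a) (β q : ℝ) {t : ℝ} (ht : 0 < t) :
    HasDerivAt (fun s => ∑' k, a k * s ^ (β - q * k))
      (∑' k, a k * (β - q * k) * t ^ (β - 1 - q * k)) t := by
  set M := (t / 2) ^ (β - 1) + (2 * t) ^ (β - 1)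
  set R := (t / 2) ^ (-q) + (2 * t) ^ (-q)
  have hR : 0 ≤ R := by positivity
  have hmem : t ∈ Set.Ioo (t / 2) (2 * t) := ⟨by linarith, by linarith⟩
  refine hasDerivAt_tsum_of_isPreconnected (g := fun k s => a k * s ^ (β - q * k))
    (g' := fun k s => a k * (β - q * k) * s ^ (β - 1 - q * k))
    (((ha.mul_linear β q R).abs).mul_left M)
    isOpen_Ioo isPreconnected_Ioo (fun k y hy => ?_) (fun k y hy => ?_) hmem
    (ha.summable_rpow β q ht) hmem
  · have hy₀ : 0 < y := (half_pos ht).trans hy.1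
    exact ((hasDerivAt_rpow_const (p := β - q * k) (Or.inl hy₀.ne')).const_mul (a k)).congr_deriv
      (by rw [sub_right_comm]; ring)
  · have hy₀ : 0 < y := (half_pos ht).trans hy.1
    have hpow : y ^ (β - 1 - q * k) ≤ M * R ^ k := by
      rw [rpow_sub_mul_natCast hy₀]
      gcongr <;> exact rpow_le_rpow_add_rpow _ (half_pos ht) hy.1.le hy.2.le
    calc ‖a k * (β - q * k) * y ^ (β - 1 - q * k)‖
        = |a k * (β - q * k)| * y ^ (β - 1 - q * k) := by
          rw [norm_mul, norm_eq_abs, norm_of_nonneg (rpow_nonneg hy₀.le _)]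
      _ ≤ |a k * (β - q * k)| * (M * R ^ k) := by gcongr
      _ = M * |a k * (β - q * k) * R ^ k| := by
          rw [abs_mul _ (R ^ k), abs_of_nonneg (pow_nonneg hR k)]; ring

lemma deriv_deriv_tsum_rpow (ha : IsEntireCoeffs a) (β q : ℝ) {t : ℝ} (ht : 0 < t) :
    deriv (deriv fun s => ∑' k, a k * s ^ (β - q * k)) t =
      ∑' k, a k * (β - q * k) * (β - 1 - q * k) * t ^ (β - 2 - q * k) := by
  have hderiv : deriv (fun s => ∑' k, a k * s ^ (β - q * k)) =ᶠ[𝓝 t]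
      fun s => ∑' k, a k * (β - q * k) * s ^ (β - 1 - q * k) := by
    filter_upwards [Ioi_mem_nhds ht] with s hs using (ha.hasDerivAt_tsum_rpow β q hs).deriv
  have h := (ha.mul_linear β q).hasDerivAt_tsum_rpow (β - 1) q ht
  rw [show β - 1 - 1 = β - 2 by ring] at h
  rw [hderiv.deriv_eq]
  exact h.deriv

theorem deriv_deriv_tsum_rpow_add_eq_zero (ha : IsEntireCoeffs a) {β q : ℝ}
    (hβ : β * (β - 1) = 0)
    (hrec : ∀ k : ℕ, a (k + 1) * ((β - q * ↑(k + 1)) * (β - 1 - q * ↑(k + 1))) + a k = 0)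
    {t : ℝ} (ht : 0 < t) :
    deriv (deriv fun s => ∑' k, a k * s ^ (β - q * k)) t
      + t ^ (-2 - q) * ∑' k, a k * t ^ (β - q * k) = 0 := by
  have hsum := ((ha.mul_linear β q).mul_linear (β - 1) q).summable_rpow (β - 2) q ht
  have hshift : ∀ k : ℕ, a (k + 1) * (β - q * ↑(k + 1)) * (β - 1 - q * ↑(k + 1))
      * t ^ (β - 2 - q * ↑(k + 1)) = -(t ^ (-2 - q) * (a k * t ^ (β - q * k))) := by
    intro k
    have hexp : t ^ (β - 2 - q * ↑(k + 1)) = t ^ (-2 - q) * t ^ (β - q * k) := by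
      rw [← rpow_add ht]; push_cast; ring_nf
    rw [hexp]; linear_combination (t ^ (-2 - q) * t ^ (β - q * k)) * hrec k
  have hzero : a 0 * (β - q * ↑(0 : ℕ)) * (β - 1 - q * ↑(0 : ℕ)) = 0 := by
    simp only [cast_zero, mul_zero, sub_zero, mul_assoc, hβ]
  rw [deriv_deriv_tsum_rpow ha β q ht, hsum.tsum_eq_zero_add, hzero, zero_mul, zero_add,
    tsum_congr hshift, tsum_neg, tsum_mul_left, neg_add_cancel]

end IsEntireCoeffs

noncomputable def frobeniusCoeff (P : ℕ → ℝ) : ℕ → ℝ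
  | 0 => 1
  | k + 1 => -frobeniusCoeff P k / P (k + 1)

lemma frobeniusCoeff_succ_mul_add {P : ℕ → ℝ} {k : ℕ} (h : P (k + 1) ≠ 0) :
    frobeniusCoeff P (k + 1) * P (k + 1) + frobeniusCoeff P k = 0 := by
  rw [frobeniusCoeff, div_mul_cancel₀ _ h, neg_add_cancel]

lemma abs_frobeniusCoeff_le {P : ℕ → ℝ} {ε : ℝ} (hε : 0 < ε)
    (hP : ∀ k : ℕ, 1 ≤ k → ε * (k : ℝ) ^ 2 ≤ |P k|) (k : ℕ) :
    |frobeniusCoeff P k| ≤ ε⁻¹ ^ k / (k ! : ℝ) ^ 2 := by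
  induction k with
  | zero => simp [frobeniusCoeff]
  | succ k ih =>
    have hPk := hP (k + 1) k.succ_pos
    calc |frobeniusCoeff P (k + 1)| = |frobeniusCoeff P k| / |P (k + 1)| := by
          rw [frobeniusCoeff, abs_div, abs_neg]
      _ ≤ ε⁻¹ ^ k / (k ! : ℝ) ^ 2 / (ε * ((k + 1 : ℕ) : ℝ) ^ 2) :=
          div_le_div₀ (by positivity) ih (by positivity) hPk
      _ = ε⁻¹ ^ (k + 1) / ((k + 1)! : ℝ) ^ 2 := by
          rw [factorial_succ, pow_succ ε⁻¹]; push_cast; field_simp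

lemma exists_pos_mul_le_abs_sub_mul {a q : ℝ} (hq : 0 < q) (h : ∀ k : ℕ, 1 ≤ k → a ≠ q * k) :
    ∃ δ > 0, ∀ k : ℕ, 1 ≤ k → δ * k ≤ |a - q * k| := by
  have hlim : Tendsto (fun k : ℕ => |a / k - q|⁻¹) atTop (𝓝 |0 - q|⁻¹) :=
    ((tendsto_const_div_atTop_nhds_zero_nat a).sub_const q).abs.inv₀ (by simp [hq.ne'])
  obtain ⟨B, hB⟩ := hlim.bddAbove_range
  have hB' : ∀ k : ℕ, |a / k - q|⁻¹ ≤ B := fun k => hB ⟨k, rfl⟩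
  -- at `k = 0` the junk value `a / 0 = 0` makes the term `|q|⁻¹ > 0`
  have hBpos : 0 < B := lt_of_lt_of_le (by simp [hq.ne']) (hB' 0)
  refine ⟨B⁻¹, inv_pos.2 hBpos, fun k hk => ?_⟩
  have hk0 : (0 : ℝ) < k := by exact_mod_cast hk
  have hne : 0 < |a / k - q| := abs_pos.2 fun h' => h k hk (by field_simp at h'; linarith)
  calc B⁻¹ * k ≤ |a / k - q| * k := by gcongr; exact inv_le_of_inv_le₀ hne (hB' k)
    _ = |(a / k - q) * k| := by rw [abs_mul, abs_of_pos hk0]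
    _ = |a - q * k| := by congr 1; field_simp

lemma exists_pos_mul_sq_le_abs_mul {β q : ℝ} (hq : 0 < q) (h₀ : ∀ k : ℕ, 1 ≤ k → β ≠ q * k)
    (h₁ : ∀ k : ℕ, 1 ≤ k → β - 1 ≠ q * k) :
    ∃ ε > 0, ∀ k : ℕ, 1 ≤ k → ε * (k : ℝ) ^ 2 ≤ |(β - q * k) * (β - 1 - q * k)| := by
  obtain ⟨δ₀, hδ₀, hb₀⟩ := exists_pos_mul_le_abs_sub_mul hq h₀
  obtain ⟨δ₁, hδ₁, hb₁⟩ := exists_pos_mul_le_abs_sub_mul hq h₁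
  refine ⟨δ₀ * δ₁, mul_pos hδ₀ hδ₁, fun k hk => ?_⟩
  calc δ₀ * δ₁ * (k : ℝ) ^ 2 = (δ₀ * k) * (δ₁ * k) := by ring
    _ ≤ |β - q * k| * |β - 1 - q * k| := by
        gcongr
        exacts [hb₀ k hk, hb₁ k hk]
    _ = |(β - q * k) * (β - 1 - q * k)| := (abs_mul _ _).symm

/-- For `ν > 0` not an even integer and `j ∈ {0,1}`, the recursion
`c_{j,0} = 1`, `c_{j,k}(j - 2k/ν)(j - 1 - 2k/ν) + c_{j,k-1} = 0` is solvable, the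
coefficients satisfy `|c_{j,k}| ≤ C^k/(k!)²`, and
`φ_j(τ) = Σ_k c_{j,k} τ^{j-2k/ν}` converges for all `τ > 0` and solves
`φ'' + τ^{-2-2/ν} φ = 0`. -/
theorem stmt_16 (ν : ℝ) (hν : 0 < ν) (hνe : ∀ n : ℤ, ν ≠ 2 * (n : ℝ))
    (j : ℕ) (hj : j = 0 ∨ j = 1) :
    ∃ c : ℕ → ℝ, c 0 = 1 ∧
      (∀ k : ℕ, 1 ≤ k →
        c k * (((j : ℝ) - 2 * (k : ℝ) / ν) * ((j : ℝ) - 1 - 2 * (k : ℝ) / ν)) + c (k - 1) = 0) ∧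
      (∃ C > (0:ℝ), ∀ k : ℕ, |c k| ≤ C ^ k / ((Nat.factorial k : ℝ)) ^ 2) ∧
      (∀ τ : ℝ, 0 < τ →
        Summable (fun k : ℕ => c k * τ ^ ((j : ℝ) - 2 * (k : ℝ) / ν))) ∧
      (∀ τ : ℝ, 0 < τ →
        deriv (deriv (fun t : ℝ => ∑' k : ℕ, c k * t ^ ((j : ℝ) - 2 * (k : ℝ) / ν))) τ
          + τ ^ (-2 - 2 / ν) * (∑' k : ℕ, c k * τ ^ ((j : ℝ) - 2 * (k : ℝ) / ν)) = 0) := by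
  have hq : 0 < 2 / ν := by positivity
  have hdiv : ∀ k : ℕ, 2 * (k : ℝ) / ν = 2 / ν * k := fun k => by ring
  simp only [hdiv]
  have hqk : ∀ k : ℕ, 1 ≤ k → 0 < 2 / ν * k := fun k hk => by positivity
  have hj₀ : ∀ k : ℕ, 1 ≤ k → (j : ℝ) ≠ 2 / ν * k := by
    rintro k hk h
    rcases hj with rfl | rfl
    · exact (hqk k hk).ne (by simpa using h)
    · exact hνe k (by push_cast at h ⊢; field_simp at h; linarith)
  have hj₁ : ∀ k : ℕ, 1 ≤ k → (j : ℝ) - 1 ≠ 2 / ν * k := fun k hk h => by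
    have : (j : ℝ) ≤ 1 := by rcases hj with rfl | rfl <;> norm_num
    linarith [hqk k hk]
  obtain ⟨ε, hε, hP⟩ := exists_pos_mul_sq_le_abs_mul hq hj₀ hj₁
  set c := frobeniusCoeff fun k : ℕ => ((j : ℝ) - 2 / ν * k) * ((j : ℝ) - 1 - 2 / ν * k)
  have hrec : ∀ k : ℕ, c (k + 1) * (((j : ℝ) - 2 / ν * ↑(k + 1)) * ((j : ℝ) - 1 - 2 / ν * ↑(k + 1)))
      + c k = 0 := fun k =>
    frobeniusCoeff_succ_mul_add (abs_pos.1 (lt_of_lt_of_le (by positivity) (hP (k + 1) k.succ_pos)))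
  have hbound := abs_frobeniusCoeff_le hε hP
  have hc : IsEntireCoeffs c := .of_abs_le_pow_div_factorial_sq (inv_nonneg.2 hε.le) hbound
  refine ⟨c, rfl, fun k hk => ?_, ⟨ε⁻¹, inv_pos.2 hε, hbound⟩,
    fun τ hτ => hc.summable_rpow _ _ hτ,
    fun τ hτ => hc.deriv_deriv_tsum_rpow_add_eq_zero ?_ hrec hτ⟩
  · obtain ⟨k, rfl⟩ := Nat.exists_eq_add_of_le' hk
    exact hrec k
  · rcases hj with rfl | rfl <;> norm_num
end
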